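/- Let G₁ and G₂ be groups, h ∈ G₁ with h ≠ 1, and k ∈ G₂ with k ≠ 1. Let Γ = G₁ ∗ G₂ be the free product and set w := inl(h) · inr(k) ∈ Γ. In ℓ²(Γ;ℂ), let η := (δ₁ + δ_w)/‖δ₁ + δ_w‖. Then ⟨δ₁, λ(w)δ₁⟩ = 0 while ⟨η, λ(w)η⟩ = 1/2. -/

import Mathlib

open Monoid
open scoped ENNReal InnerProductSpace

noncomputable section

private theorem translMem {X : Type*} (e : X ≃ X) (f : lp (fun _ : X => ℂ) 2) :
    Memℓp (fun x => f (e x)) 2 := by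
  apply memℓp_gen
  exact (Equiv.summable_iff e (f := fun i => ‖f i‖ ^ (2 : ℝ≥0∞).toReal)).2
    ((lp.memℓp f).summable (by norm_num))

/-- The linear isometry equivalence `f ↦ f ∘ e` of `ℓ²(X;ℂ)` induced by a bijection
`e` of `X`. -/
def translIso {X : Type*} (e : X ≃ X) :
    lp (fun _ : X => ℂ) 2 ≃ₗᵢ[ℂ] lp (fun _ : X => ℂ) 2 where
  toFun f := ⟨fun x => f (e x), translMem e f⟩
  invFun f := ⟨fun x => f (e.symm x), translMem e.symm f⟩
  map_add' f g := by ext x; simp [lp.coeFn_add]; rfl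
  map_smul' c f := by ext x; simp [lp.coeFn_smul]
  left_inv f := by ext x; simp
  right_inv f := by ext x; simp
  norm_map' f := by
    rw [lp.norm_eq_tsum_rpow (by norm_num), lp.norm_eq_tsum_rpow (by norm_num)]
    congr 1
    exact e.tsum_eq (f := fun x => ‖f x‖ ^ (2 : ℝ≥0∞).toReal)

/-- The left translation `λ(g)` on `ℓ²(Γ;ℂ)`, the unitary given by
`(λ(g) f)(x) = f (g⁻¹ * x)`. -/
def leftTransl {Γ : Type*} [Group Γ] (g : Γ) :
    lp (fun _ : Γ => ℂ) 2 ≃ₗᵢ[ℂ] lp (fun _ : Γ => ℂ) 2 :=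
  translIso (Equiv.mulLeft g⁻¹)

/-! In a free product `w = inl h * inr k` satisfies `w ≠ 1` and `w² ≠ 1`, so `δ₁`, `δ_w`,
`δ_{w²}` are orthonormal. Hence `‖δ₁ + δ_w‖² = 2`, while `λ(w)(δ₁ + δ_w) = δ_w + δ_{w²}` shares
with `δ₁ + δ_w` only the component `δ_w`, so their inner product is `1`. -/

theorem inner_inv_norm_smul_map_inv_norm_smul {𝕜 E F : Type*} [RCLike 𝕜] [NormedAddCommGroup E]
    [InnerProductSpace 𝕜 E] [Module ℝ E] [IsScalarTower ℝ 𝕜 E] [FunLike F E E]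
    [LinearMapClass F 𝕜 E E] (T : F) (v : E) :
    ⟪‖v‖⁻¹ • v, T (‖v‖⁻¹ • v)⟫_𝕜 = ⟪v, T v⟫_𝕜 / (‖v‖ ^ 2 : ℝ) := by
  rw [RCLike.real_smul_eq_coe_smul (K := 𝕜), map_smul, inner_smul_left, inner_smul_right,
    RCLike.conj_ofReal]
  push_cast
  ring

namespace lp

variable {ι : Type*} [DecidableEq ι] {G : ι → Type*} [∀ i, NormedAddCommGroup (G i)]

theorem inner_single_single_of_ne {𝕜 : Type*} [RCLike 𝕜] [∀ i, InnerProductSpace 𝕜 (G i)]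
    {i j : ι} (hij : i ≠ j) (a : G i) (b : G j) :
    ⟪lp.single 2 i a, lp.single 2 j b⟫_𝕜 = 0 := by
  rw [lp.inner_single_left, lp.single_apply, Pi.single_eq_of_ne hij, inner_zero_right]

theorem inner_single_single_self {𝕜 : Type*} [RCLike 𝕜] [∀ i, InnerProductSpace 𝕜 (G i)]
    (i : ι) (a b : G i) :
    ⟪lp.single 2 i a, lp.single 2 i b⟫_𝕜 = ⟪a, b⟫_𝕜 := by
  rw [lp.inner_single_left, lp.single_apply, Pi.single_eq_same]

theorem norm_single_add_single_sq (𝕜 : Type*) [RCLike 𝕜] [∀ i, InnerProductSpace 𝕜 (G i)]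
    {i j : ι} (hij : i ≠ j) (a : G i) (b : G j) :
    ‖lp.single 2 i a + lp.single 2 j b‖ ^ 2 = ‖a‖ ^ 2 + ‖b‖ ^ 2 := by
  rw [@norm_add_sq 𝕜, inner_single_single_of_ne hij, map_zero, mul_zero, add_zero,
    lp.norm_single (by norm_num), lp.norm_single (by norm_num)]

end lp

section LeftRegular

variable {Γ : Type*} [Group Γ] [DecidableEq Γ]

theorem translIso_single {X : Type*} [DecidableEq X] (e : X ≃ X) (x : X) (c : ℂ) :
    translIso e (lp.single 2 x c) = lp.single 2 (e.symm x) c := by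
  ext y
  show (lp.single 2 x c : ∀ _ : X, ℂ) (e y) = _
  simp only [lp.single_apply, Pi.single_apply, Equiv.eq_symm_apply, eq_comm]

theorem leftTransl_single (g x : Γ) (c : ℂ) :
    leftTransl g (lp.single 2 x c) = lp.single 2 (g * x) c := by
  rw [leftTransl, translIso_single]
  simp

theorem inner_single_one_add_single_leftTransl {w : Γ} (hw : w ≠ 1) (hw2 : w * w ≠ 1) :
    ⟪lp.single 2 1 (1 : ℂ) + lp.single 2 w 1,
      leftTransl w (lp.single 2 1 (1 : ℂ) + lp.single 2 w 1)⟫_ℂ = 1 := by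
  have hww : w ≠ w * w := fun h => hw (by simpa using h.symm)
  rw [map_add, leftTransl_single, leftTransl_single, mul_one, inner_add_left, inner_add_right,
    inner_add_right, lp.inner_single_single_of_ne hw.symm, lp.inner_single_single_of_ne hw2.symm,
    lp.inner_single_single_self, lp.inner_single_single_of_ne hww]
  simp

end LeftRegular

namespace Monoid.Coprod

variable {G₁ G₂ : Type*} [Group G₁] [Group G₂]

theorem inl_mul_inr_ne_one {h : G₁} (hh : h ≠ 1) (k : G₂) : inl h * inr k ≠ 1 := fun e =>
  hh <| by simpa using congrArg fst e

def mulLeftFstOnAxis [DecidableEq G₂] : G₁ →* Equiv.Perm (G₁ × G₂) where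
  toFun g := Equiv.prodCongrLeft fun b => if b = 1 then Equiv.mulLeft g else 1
  map_one' := by ext ⟨a, b⟩ <;> by_cases hb : b = 1 <;> simp [hb]
  map_mul' g g' := by ext ⟨a, b⟩ <;> by_cases hb : b = 1 <;> simp [hb]

def mulLeftSndOnAxis [DecidableEq G₁] : G₂ →* Equiv.Perm (G₁ × G₂) where
  toFun g := Equiv.prodCongrRight fun a => if a = 1 then Equiv.mulLeft g else 1
  map_one' := by ext ⟨a, b⟩ <;> by_cases ha : a = 1 <;> simp [ha]
  map_mul' g g' := by ext ⟨a, b⟩ <;> by_cases ha : a = 1 <;> simp [ha]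

/-- On `G₁ × G₂`, let `G₁` translate the first coordinate of the points `(a, 1)` and `G₂` the
second coordinate of the points `(1, b)`, all other points being fixed. Then `w * w` moves
`(h⁻¹, 1)` to `(1, k)`: `k` fixes it as `h⁻¹ ≠ 1`, `h` moves it to `(1, 1)`, `k` to `(1, k)`,
and `h` fixes that as `k ≠ 1`. -/
theorem inl_mul_inr_mul_self_ne_one {h : G₁} (hh : h ≠ 1) {k : G₂} (hk : k ≠ 1) :
    (inl h * inr k) * (inl h * inr k) ≠ 1 := by
  classical
  intro e
  have := congrArg (fun σ => (σ (h⁻¹, 1)).2)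
    (congrArg (lift mulLeftFstOnAxis mulLeftSndOnAxis) e)
  simp [mulLeftFstOnAxis, mulLeftSndOnAxis, hh, hk] at this

end Monoid.Coprod

/-- computation of Example 3.5. Let `h ≠ 1` in `G₁`, `k ≠ 1` in
`G₂`, `Γ = G₁ ∗ G₂` the free product, `w = inl h * inr k`, and
`η = (δ₁ + δ_w)/‖δ₁ + δ_w‖` in `ℓ²(Γ;ℂ)`. Then `⟪δ₁, λ(w) δ₁⟫ = 0`
while `⟪η, λ(w) η⟫ = 1/2`. -/
theorem free_joinings_stmt15
    {G₁ G₂ : Type*} [Group G₁] [Group G₂] [DecidableEq (Coprod G₁ G₂)]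
    (h : G₁) (hh : h ≠ 1) (k : G₂) (hk : k ≠ 1) :
    let Γ := Coprod G₁ G₂
    let w : Γ := Coprod.inl h * Coprod.inr k
    let δ₁ : lp (fun _ : Γ => ℂ) 2 := lp.single 2 (1 : Γ) (1 : ℂ)
    let δw : lp (fun _ : Γ => ℂ) 2 := lp.single 2 w (1 : ℂ)
    let η : lp (fun _ : Γ => ℂ) 2 := ‖δ₁ + δw‖⁻¹ • (δ₁ + δw)
    ⟪δ₁, leftTransl w δ₁⟫_ℂ = 0 ∧ ⟪η, leftTransl w η⟫_ℂ = 1 / 2 := by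
  intro Γ w δ₁ δw η
  have hw : w ≠ 1 := Coprod.inl_mul_inr_ne_one hh k
  have hw2 : w * w ≠ 1 := Coprod.inl_mul_inr_mul_self_ne_one hh hk
  have hδ₁ : leftTransl w δ₁ = δw := by rw [leftTransl_single, mul_one]
  refine ⟨hδ₁ ▸ lp.inner_single_single_of_ne hw.symm 1 1, ?_⟩
  rw [inner_inv_norm_smul_map_inv_norm_smul, inner_single_one_add_single_leftTransl hw hw2,
    lp.norm_single_add_single_sq ℂ hw.symm]
  norm_num

end
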